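/- Let S be a graded polynomial ring k[x_1,...,x_n] with deg x_i ≥ 1 and a Poisson bracket preserving the grading, and suppose the first Poisson cohomology H^1_Poiss(S) vanishes. If I = (f) is a graded principal Poisson ideal with homogeneous generator f ≠ 0, then f is a Casimir: {x_i, f} = 0 for all i. -/

import Mathlib

/-!
Since `(f)` is a Poisson ideal, `{x_i, f} = Z_i f` for some `Z_i`. Expanding the Jacobi identity
for `x_i, x_j, f` with the Leibniz rule shows that `Z` satisfies the cocycle condition multiplied
by `f ≠ 0`, so `Z` is a Poisson 1-cocycle, hence `Z_i = {x_i, a}`. The bracket `{x_i, ·}` shifts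
weighted degree by `p + w_i`, so the degree `p + w_i + d` component of `{x_i, f} = {x_i, a} f`
reads `{x_i, f} = {x_i, a_0} f`, where `a_0` is the degree `0` part of `a`. All weights being
positive, `a_0` is a constant and `{x_i, a_0} = 0`.
-/

open MvPolynomial

/-- The Poisson bracket on a polynomial ring extending `Λ i j = {x_i, x_j}` as a
biderivation. -/
noncomputable def pb {k : Type*} [CommSemiring k] {σ : Type*} [Fintype σ] [DecidableEq σ]
    (Λ : σ → σ → MvPolynomial σ k) (f g : MvPolynomial σ k) : MvPolynomial σ k :=
  ∑ i, ∑ j, Λ i j * pderiv i f * pderiv j g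

theorem Finsupp.weight_pos {σ M : Type*} [AddCommMonoid M] [PartialOrder M]
    [IsOrderedCancelAddMonoid M] {w : σ → M} (hw : ∀ i, 0 < w i) {d : σ →₀ ℕ} (hd : d ≠ 0) :
    0 < weight w d := by
  rw [weight_apply, Finsupp.sum]
  exact Finset.sum_pos (fun i hi => nsmul_pos (hw i) (mem_support_iff.mp hi))
    (support_nonempty_iff.mpr hd)

namespace MvPolynomial

variable {R σ M : Type*} [CommSemiring R]

theorem weightedHomogeneousComponent_zero_of_pos [AddCommMonoid M] [PartialOrder M]
    [IsOrderedCancelAddMonoid M] {w : σ → M} (hw : ∀ i, 0 < w i) (φ : MvPolynomial σ R) :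
    weightedHomogeneousComponent w 0 φ = C (coeff 0 φ) := by
  classical
  ext d
  rw [coeff_weightedHomogeneousComponent, coeff_C]
  by_cases hd : d = 0
  · simp [hd]
  · rw [if_neg (Finsupp.weight_pos hw hd).ne', if_neg (Ne.symm hd)]

theorem weightedHomogeneousComponent_add_apply_of_shift [AddCancelCommMonoid M] {F : Type*}
    [FunLike F (MvPolynomial σ R) (MvPolynomial σ R)]
    [AddMonoidHomClass F (MvPolynomial σ R) (MvPolynomial σ R)] (w : σ → M) (L : F) (s : M)
    (hL : ∀ m φ, IsWeightedHomogeneous w φ m → IsWeightedHomogeneous w (L φ) (m + s))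
    (m : M) (φ : MvPolynomial σ R) :
    weightedHomogeneousComponent w (m + s) (L φ) = L (weightedHomogeneousComponent w m φ) := by
  classical
  have hfin := weightedHomogeneousComponent_finsupp (w := w) φ
  conv_lhs => rw [← sum_weightedHomogeneousComponent w φ, finsum_eq_sum _ hfin]
  rw [map_sum, map_sum, Finset.sum_eq_single m]
  · exact (hL m _ (weightedHomogeneousComponent_isWeightedHomogeneous m φ)
      ).weightedHomogeneousComponent_same
  · intro e _ hem
    exact (hL e _ (weightedHomogeneousComponent_isWeightedHomogeneous e φ)
      ).weightedHomogeneousComponent_ne _ fun h => hem (add_right_cancel h).symm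
  · intro hm
    have hφm : weightedHomogeneousComponent w m φ = 0 :=
      Function.notMem_support.mp (mt (Set.Finite.mem_toFinset hfin).mpr hm)
    rw [hφm, map_zero, map_zero]

theorem IsWeightedHomogeneous.weightedHomogeneousComponent_add_mul [AddCancelCommMonoid M]
    {w : σ → M} {f : MvPolynomial σ R} {d : M} (hf : IsWeightedHomogeneous w f d) (m : M)
    (φ : MvPolynomial σ R) :
    weightedHomogeneousComponent w (m + d) (φ * f) = weightedHomogeneousComponent w m φ * f :=
  weightedHomogeneousComponent_add_apply_of_shift w (AddMonoidHom.mulRight f) d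
    (fun _ _ hφ => hφ.mul hf) m φ

end MvPolynomial

section PoissonBracket

variable {k σ : Type*} [CommRing k] [Fintype σ] [DecidableEq σ] (Λ : σ → σ → MvPolynomial σ k)

noncomputable def pbDerivation (g : MvPolynomial σ k) :
    Derivation k (MvPolynomial σ k) (MvPolynomial σ k) :=
  ∑ i, ∑ j, (Λ i j * pderiv i g) • pderiv j

theorem pbDerivation_apply (g h : MvPolynomial σ k) : pbDerivation Λ g h = pb Λ g h := by
  rw [pbDerivation, ← Derivation.coeFnAddMonoidHom_apply]
  simp only [map_sum, Finset.sum_apply, Derivation.coeFnAddMonoidHom_apply,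
    Derivation.smul_apply, smul_eq_mul, pb]

theorem pb_mul_right (g a b : MvPolynomial σ k) :
    pb Λ g (a * b) = pb Λ g a * b + a * pb Λ g b := by
  simp only [← pbDerivation_apply, Derivation.leibniz, smul_eq_mul]
  ring

theorem pb_neg_right (g a : MvPolynomial σ k) : pb Λ g (-a) = -pb Λ g a := by
  simp only [← pbDerivation_apply, map_neg]

theorem pb_C_right (g : MvPolynomial σ k) (c : k) : pb Λ g (C c) = 0 := by
  rw [← pbDerivation_apply, derivation_C]

theorem pb_X_left (i : σ) (g : MvPolynomial σ k) : pb Λ (X i) g = ∑ j, Λ i j * pderiv j g := by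
  simp [pb, pderiv_X, Pi.single_apply]

theorem pb_X_X (i j : σ) : pb Λ (X i) (X j) = Λ i j := by
  simp [pb_X_left, pderiv_X, Pi.single_apply]

theorem pb_eq_sum_pderiv_mul_pb_X (g h : MvPolynomial σ k) :
    pb Λ g h = ∑ l, pderiv l g * pb Λ (X l) h := by
  simp only [pb_X_left, Finset.mul_sum]
  exact Finset.sum_congr rfl fun _ _ => Finset.sum_congr rfl fun _ _ => by ring

theorem pb_eq_neg_swap (hanti : ∀ i j, Λ i j = -Λ j i) (g h : MvPolynomial σ k) :
    pb Λ g h = -pb Λ h g := by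
  rw [pb, pb, Finset.sum_comm, ← Finset.sum_neg_distrib]
  refine Finset.sum_congr rfl fun j _ => ?_
  rw [← Finset.sum_neg_distrib]
  exact Finset.sum_congr rfl fun i _ => by rw [hanti i j]; ring

theorem isWeightedHomogeneous_pb {w : σ → ℤ} {p : ℤ}
    (hΛ : ∀ i j, IsWeightedHomogeneous w (Λ i j) (p + w i + w j))
    {g h : MvPolynomial σ k} {m m' : ℤ} (hg : IsWeightedHomogeneous w g m)
    (hh : IsWeightedHomogeneous w h m') :
    IsWeightedHomogeneous w (pb Λ g h) (p + m + m') := by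
  refine IsWeightedHomogeneous.sum _ _ _ fun i _ => IsWeightedHomogeneous.sum _ _ _ fun j _ => ?_
  convert ((hΛ i j).mul (hg.pderiv (n' := m - w i) (by ring))).mul
    (hh.pderiv (n' := m' - w j) (by ring)) using 1
  ring

theorem weightedHomogeneousComponent_pb_X {w : σ → ℤ} {p : ℤ}
    (hΛ : ∀ i j, IsWeightedHomogeneous w (Λ i j) (p + w i + w j)) (i : σ) (m : ℤ)
    (φ : MvPolynomial σ k) :
    weightedHomogeneousComponent w (m + (p + w i)) (pb Λ (X i) φ) =
      pb Λ (X i) (weightedHomogeneousComponent w m φ) := by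
  simp only [← pbDerivation_apply]
  refine weightedHomogeneousComponent_add_apply_of_shift w _ _ (fun m ψ hψ => ?_) m φ
  rw [pbDerivation_apply, add_comm m]
  exact isWeightedHomogeneous_pb Λ hΛ (isWeightedHomogeneous_X k w i) hψ

def IsPoissonCocycle (W : σ → MvPolynomial σ k) : Prop :=
  ∀ i j, pb Λ (X i) (W j) - pb Λ (X j) (W i) - ∑ l, W l * pderiv l (Λ i j) = 0

theorem isPoissonCocycle_of_pb_X_eq_mul [IsDomain k] (hanti : ∀ i j, Λ i j = -Λ j i)
    (hjac : ∀ f g h, pb Λ f (pb Λ g h) + pb Λ g (pb Λ h f) + pb Λ h (pb Λ f g) = 0)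
    {f : MvPolynomial σ k} (hf : f ≠ 0) {Z : σ → MvPolynomial σ k}
    (hZ : ∀ i, pb Λ (X i) f = Z i * f) :
    IsPoissonCocycle Λ Z := by
  intro i j
  have hΛf : pb Λ f (Λ i j) = -(∑ l, Z l * pderiv l (Λ i j)) * f := by
    rw [pb_eq_neg_swap Λ hanti, pb_eq_sum_pderiv_mul_pb_X, neg_mul, Finset.sum_mul]
    simp only [hZ]
    exact congrArg Neg.neg (Finset.sum_congr rfl fun l _ => by ring)
  have hJ := hjac (X i) (X j) f
  rw [pb_eq_neg_swap Λ hanti f (X i), pb_X_X, hΛf] at hJ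
  simp only [hZ, pb_neg_right, pb_mul_right] at hJ
  refine (mul_eq_zero.mp ?_).resolve_right hf
  linear_combination hJ

end PoissonBracket

theorem principal_poisson_ideal_generator_casimir_general
    (k : Type*) [Field k] (n : ℕ)
    (Λ : Fin n → Fin n → MvPolynomial (Fin n) k)
    (hanti : ∀ i j, Λ i j = - Λ j i)
    (hjac : ∀ f g h : MvPolynomial (Fin n) k,
        pb Λ f (pb Λ g h) + pb Λ g (pb Λ h f) + pb Λ h (pb Λ f g) = 0)
    (w : Fin n → ℤ) (hw : ∀ i, 1 ≤ w i) (p : ℤ)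
    (hΛdeg : ∀ i j, IsWeightedHomogeneous w (Λ i j) (p + w i + w j))
    (hH1 : ∀ W : Fin n → MvPolynomial (Fin n) k,
        (∀ i j, pb Λ (X i) (W j) - pb Λ (X j) (W i)
            - ∑ l, W l * pderiv l (Λ i j) = 0) →
        ∃ a : MvPolynomial (Fin n) k, ∀ i, W i = pb Λ (X i) a)
    (f : MvPolynomial (Fin n) k) (hf : f ≠ 0)
    (d : ℤ) (hfhom : IsWeightedHomogeneous w f d)
    (hPoisson : ∀ g : MvPolynomial (Fin n) k,
        ∀ h ∈ Ideal.span {f}, pb Λ g h ∈ Ideal.span {f}) :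
    ∀ i, pb Λ (X i) f = 0 := by
  choose Z hZ using fun i =>
    Ideal.mem_span_singleton'.mp (hPoisson (X i) f (Ideal.mem_span_singleton_self f))
  obtain ⟨a, ha⟩ := hH1 Z (isPoissonCocycle_of_pb_X_eq_mul Λ hanti hjac hf fun i => (hZ i).symm)
  intro i
  calc pb Λ (X i) f
      = weightedHomogeneousComponent w (0 + (p + w i) + d) (pb Λ (X i) a * f) := by
        rw [← ha, hZ, zero_add]
        exact (isWeightedHomogeneous_pb Λ hΛdeg (isWeightedHomogeneous_X k w i)
          hfhom).weightedHomogeneousComponent_same.symm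
    _ = pb Λ (X i) (weightedHomogeneousComponent w 0 a) * f := by
        rw [hfhom.weightedHomogeneousComponent_add_mul,
          weightedHomogeneousComponent_pb_X Λ hΛdeg]
    _ = 0 := by
        rw [weightedHomogeneousComponent_zero_of_pos fun j => zero_lt_one.trans_le (hw j),
          pb_C_right, zero_mul]

/-- let `S = k[x_1,…,x_n]` be graded with `deg x_i ≥ 1` and a Poisson
bracket of degree `p` (so `Λ_{ij}` is weighted homogeneous of degree `p + deg x_i + deg x_j`).
Assume the first Poisson cohomology vanishes: every Poisson 1-cocycle
`W = ∑ W_i ∂/∂x_i` (i.e. `{x_i,W_j} - {x_j,W_i} - ∑_ℓ W_ℓ ∂Λ_{ij}/∂x_ℓ = 0`) is a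
coboundary (`W_i = {x_i, a}` for some `a`).  If `(f)` is a graded principal Poisson ideal
with homogeneous generator `f ≠ 0`, then `f` is a Casimir: `{x_i, f} = 0` for all `i`. -/
theorem principal_poisson_ideal_generator_casimir
    (k : Type*) [Field k] [CharZero k] (n : ℕ)
    (Λ : Fin n → Fin n → MvPolynomial (Fin n) k)
    (hanti : ∀ i j, Λ i j = - Λ j i)
    (hjac : ∀ f g h : MvPolynomial (Fin n) k,
        pb Λ f (pb Λ g h) + pb Λ g (pb Λ h f) + pb Λ h (pb Λ f g) = 0)
    (w : Fin n → ℤ) (hw : ∀ i, 1 ≤ w i) (p : ℤ)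
    (hΛdeg : ∀ i j, IsWeightedHomogeneous w (Λ i j) (p + w i + w j))
    (hH1 : ∀ W : Fin n → MvPolynomial (Fin n) k,
        (∀ i j, pb Λ (X i) (W j) - pb Λ (X j) (W i)
            - ∑ l, W l * pderiv l (Λ i j) = 0) →
        ∃ a : MvPolynomial (Fin n) k, ∀ i, W i = pb Λ (X i) a)
    (f : MvPolynomial (Fin n) k) (hf : f ≠ 0)
    (d : ℤ) (hfhom : IsWeightedHomogeneous w f d)
    (hPoisson : ∀ g : MvPolynomial (Fin n) k,
        ∀ h ∈ Ideal.span {f}, pb Λ g h ∈ Ideal.span {f}) :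
    ∀ i, pb Λ (X i) f = 0 :=
  principal_poisson_ideal_generator_casimir_general k n Λ hanti hjac w hw p hΛdeg hH1 f hf d hfhom
    hPoisson
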